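/- arXiv:2003.04616 — 3 statements merged into one kernel-verified Lean document; each statement's English description precedes it below -/
import Mathlib

section
/- Let μ, ν ∈ 𝓜 both satisfy condition (M.1) and suppose (M.2) holds for the pair (μ,ν). Then 𝓟𝓐𝓟(ℝ,ℝⁿ,μ,ν) is translation invariant: for every f ∈ 𝓟𝓐𝓟(ℝ,ℝⁿ,μ,ν) and every a ∈ ℝ, the function t ↦ f(t + a) also belongs to 𝓟𝓐𝓟(ℝ,ℝⁿ,μ,ν). -/
open MeasureTheory Filter Topology

noncomputable section

/-- The class `𝓜` of positive measures on `ℝ`: infinite total mass, finite on compact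
intervals. -/
def InM (μ : Measure ℝ) : Prop :=
  μ Set.univ = ⊤ ∧ ∀ s t : ℝ, s ≤ t → μ (Set.Icc s t) < ⊤

/-- Bohr almost periodic function. -/
def AP {E : Type*} [NormedAddCommGroup E] (f : ℝ → E) : Prop :=
  Continuous f ∧ ∀ ε : ℝ, 0 < ε → ∃ l : ℝ, 0 < l ∧ ∀ a : ℝ,
    ∃ τ ∈ Set.Icc a (a + l), ∀ t : ℝ, ‖f (t + τ) - f t‖ < ε

/-- Bounded continuous function. -/
def BC {E : Type*} [NormedAddCommGroup E] (f : ℝ → E) : Prop :=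
  Continuous f ∧ ∃ C : ℝ, ∀ t : ℝ, ‖f t‖ ≤ C

/-- The ergodic space `𝓔(ℝ, E, μ, ν)`. -/
def Erg {E : Type*} [NormedAddCommGroup E] (μ ν : Measure ℝ) (f : ℝ → E) : Prop :=
  BC f ∧ Filter.Tendsto (fun z : ℝ =>
      ((ν (Set.Icc (-z) z)).toReal)⁻¹ * ∫ t in Set.Icc (-z) z, ‖f t‖ ∂μ)
    Filter.atTop (nhds 0)

/-- `(μ,ν)`-pseudo almost periodic functions `𝓟𝓐𝓟(ℝ, E, μ, ν)`. -/
def PAP {E : Type*} [NormedAddCommGroup E] (μ ν : Measure ℝ) (f : ℝ → E) : Prop :=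
  BC f ∧ ∃ g φ : ℝ → E, AP g ∧ Erg μ ν φ ∧ ∀ t, f t = g t + φ t

/-- Condition (M.1). -/
def M1 (μ : Measure ℝ) : Prop :=
  ∀ τ : ℝ, ∃ β : ℝ, 0 < β ∧ ∃ a b : ℝ, ∀ A : Set ℝ, MeasurableSet A →
    A ∩ Set.Icc a b = ∅ → μ ((fun x => x + τ) '' A) ≤ ENNReal.ofReal β * μ A

/-- Condition (M.2). -/
def M2 (μ ν : Measure ℝ) : Prop :=
  Filter.limsup (fun r : ℝ => μ (Set.Icc (-r) r) / ν (Set.Icc (-r) r)) Filter.atTop < ⊤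

/-!
Translation obviously preserves bounded continuity and Bohr almost periodicity, so only the
ergodic part needs work. Applied to `μ`, (M.1) bounds the `μ`-integral of `‖φ (· + a)‖` over
`[-z, z]` by `β` times the integral of `‖φ‖` over `[-(z + |a|), z + |a|]`, up to an additive
constant coming from the exceptional interval. Applied to `ν`, it gives
`ν [-(z + |a|), z + |a|] ≤ C ν [-z, z]` for large `z`. Since `ν [-z, z] → ∞`, the ergodic mean
of the translate is eventually dominated by `β C` times the ergodic mean of `φ` at `z + |a|`
plus `K / ν [-z, z]`, and both tend to `0`.
-/

section TranslationInvariance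

open Set
open scoped ENNReal

variable {μ ν : Measure ℝ} {E : Type*} [NormedAddCommGroup E]

lemma InM.measure_Icc_lt_top (hμ : InM μ) (s t : ℝ) : μ (Icc s t) < ∞ :=
  (measure_mono (Icc_subset_Icc (min_le_left s t) (le_max_right s t))).trans_lt
    (hμ.2 _ _ min_le_max)

lemma InM.isFiniteMeasureOnCompacts (hμ : InM μ) : IsFiniteMeasureOnCompacts μ where
  lt_top_of_isCompact _ hK :=
    (measure_mono hK.isBounded.subset_Icc_sInf_sSup).trans_lt (hμ.measure_Icc_lt_top _ _)

lemma InM.tendsto_toReal_measure_Icc (hμ : InM μ) :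
    Tendsto (fun z : ℝ => (μ (Icc (-z) z)).toReal) atTop atTop := by
  have hmono : Monotone fun z : ℝ => Icc (-z) z := fun _ _ h =>
    Icc_subset_Icc (neg_le_neg h) h
  have hunion : ⋃ z : ℝ, Icc (-z) z = univ :=
    eq_univ_of_forall fun x => mem_iUnion.2 ⟨|x|, neg_abs_le x, le_abs_self x⟩
  have h := tendsto_measure_iUnion_atTop (μ := μ) hmono
  rw [hunion, hμ.1] at h
  rw [← ENNReal.tendsto_ofReal_nhds_top]
  exact h.congr fun z => (ENNReal.ofReal_toReal (hμ.measure_Icc_lt_top _ _).ne).symm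

lemma M1.exists_map_add_le (h : M1 μ) (a : ℝ) :
    ∃ c : ℝ≥0∞, c ≠ ∞ ∧ ∃ p q : ℝ,
      μ.map (· + a) ≤ c • μ + (μ.map (· + a)).restrict (Icc p q) := by
  obtain ⟨β, -, p, q, H⟩ := h (-a)
  refine ⟨ENNReal.ofReal β, ENNReal.ofReal_ne_top, p, q, Measure.le_iff.2 fun s hs => ?_⟩
  have hsJ : MeasurableSet (s \ Icc p q) := hs.diff measurableSet_Icc
  have hoff : μ.map (· + a) (s \ Icc p q) ≤ ENNReal.ofReal β * μ s := by
    rw [Measure.map_apply (measurable_add_const a) hsJ]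
    calc μ ((· + a) ⁻¹' (s \ Icc p q)) = μ ((· + -a) '' (s \ Icc p q)) := by
          rw [image_add_right, neg_neg]
      _ ≤ ENNReal.ofReal β * μ (s \ Icc p q) := H _ hsJ (by simp)
      _ ≤ ENNReal.ofReal β * μ s := by gcongr; exact sdiff_subset
  rw [Measure.add_apply, Measure.smul_apply, smul_eq_mul, Measure.restrict_apply hs,
    ← measure_inter_add_sdiff s measurableSet_Icc, add_comm]
  gcongr

lemma M1.exists_lintegral_comp_add_le (h : M1 μ) (a : ℝ) :
    ∃ c : ℝ≥0∞, c ≠ ∞ ∧ ∃ p q : ℝ, ∀ F : ℝ → ℝ≥0∞, Measurable F → ∀ z : ℝ,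
      ∫⁻ t in Icc (-z) z, F (t + a) ∂μ ≤
        c * ∫⁻ t in Icc (-(z + |a|)) (z + |a|), F t ∂μ +
          ∫⁻ t in Icc p q, F t ∂(μ.map (· + a)) := by
  obtain ⟨c, hc, p, q, hle⟩ := h.exists_map_add_le a
  refine ⟨c, hc, p, q, fun F hF z => ?_⟩
  calc ∫⁻ t in Icc (-z) z, F (t + a) ∂μ
      = ∫⁻ x in Icc (-z + a) (z + a), F x ∂(μ.map (· + a)) := by
        rw [setLIntegral_map measurableSet_Icc hF (measurable_add_const a),
          preimage_add_const_Icc, add_sub_cancel_right, add_sub_cancel_right]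
    _ ≤ ∫⁻ x in Icc (-z + a) (z + a), F x ∂(c • μ + (μ.map (· + a)).restrict (Icc p q)) :=
        lintegral_mono' (Measure.restrict_mono subset_rfl hle) le_rfl
    _ = c * ∫⁻ x in Icc (-z + a) (z + a), F x ∂μ +
          ∫⁻ x in Icc (-z + a) (z + a) ∩ Icc p q, F x ∂(μ.map (· + a)) := by
        rw [Measure.restrict_add, lintegral_add_measure, Measure.restrict_smul,
          lintegral_smul_measure, Measure.restrict_restrict measurableSet_Icc, smul_eq_mul]
    _ ≤ _ := by
        refine add_le_add (mul_le_mul_right (lintegral_mono_set ?_) c)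
          (lintegral_mono_set inter_subset_right)
        exact Icc_subset_Icc (by linarith [neg_abs_le a]) (by linarith [le_abs_self a])

lemma M1.exists_integral_norm_comp_add_le (hμ : InM μ) (h : M1 μ) {φ : ℝ → E}
    (hφ : Continuous φ) (a : ℝ) :
    ∃ β K : ℝ, 0 ≤ β ∧ ∀ z : ℝ,
      ∫ t in Icc (-z) z, ‖φ (t + a)‖ ∂μ ≤
        β * ∫ t in Icc (-(z + |a|)) (z + |a|), ‖φ t‖ ∂μ + K := by
  have := hμ.isFiniteMeasureOnCompacts
  have : IsFiniteMeasureOnCompacts (μ.map (· + a)) :=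
    Measure.IsFiniteMeasureOnCompacts.map μ (Homeomorph.addRight a)
  obtain ⟨c, hc, p, q, hbound⟩ := h.exists_lintegral_comp_add_le a
  have hfin : ∀ (m : Measure ℝ) [IsFiniteMeasureOnCompacts m] (s t : ℝ),
      ∫⁻ x in Icc s t, ‖φ x‖ₑ ∂m ≠ ∞ := fun m _ s t =>
    (hφ.integrableOn_Icc (μ := m)).2.ne
  refine ⟨c.toReal, (∫⁻ t in Icc p q, ‖φ t‖ₑ ∂(μ.map (· + a))).toReal, ENNReal.toReal_nonneg,
    fun z => ?_⟩
  have hbulk := ENNReal.mul_ne_top hc (hfin μ (-(z + |a|)) (z + |a|))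
  rw [integral_norm_eq_lintegral_enorm (f := fun t => φ (t + a))
      (hφ.comp (continuous_add_const a)).aestronglyMeasurable,
    integral_norm_eq_lintegral_enorm hφ.aestronglyMeasurable, ← ENNReal.toReal_mul,
    ← ENNReal.toReal_add hbulk (hfin _ p q)]
  exact ENNReal.toReal_mono (ENNReal.add_ne_top.2 ⟨hbulk, hfin _ p q⟩)
    (hbound _ hφ.enorm.measurable z)

lemma M1.exists_measure_Icc_add_le (h : M1 μ) (c : ℝ) :
    ∃ β : ℝ≥0∞, β ≠ ∞ ∧ ∃ R : ℝ, ∀ s t : ℝ, R < s ∨ t < -R →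
      μ (Icc (s + c) (t + c)) ≤ β * μ (Icc s t) := by
  obtain ⟨β, -, p, q, H⟩ := h c
  refine ⟨ENNReal.ofReal β, ENNReal.ofReal_ne_top, max |p| |q|, fun s t hst => ?_⟩
  rw [← image_add_const_Icc]
  refine H _ measurableSet_Icc (eq_empty_of_forall_notMem fun x ⟨⟨hsx, hxt⟩, hpx, hxq⟩ => ?_)
  have := le_max_left |p| |q|
  have := le_max_right |p| |q|
  rcases hst with hs | ht
  · linarith [le_abs_self q]
  · linarith [neg_abs_le p]

lemma M1.exists_eventually_measure_Icc_add_le (hμ : InM μ) (h : M1 μ) (c : ℝ) :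
    ∃ C : ℝ, ∀ᶠ z in atTop,
      (μ (Icc (-(z + c)) (z + c))).toReal ≤ C * (μ (Icc (-z) z)).toReal := by
  obtain ⟨β₁, hβ₁, R₁, H₁⟩ := h.exists_measure_Icc_add_le c
  obtain ⟨β₂, hβ₂, R₂, H₂⟩ := h.exists_measure_Icc_add_le (-c)
  refine ⟨(β₂ + 1 + β₁).toReal, ?_⟩
  filter_upwards [eventually_gt_atTop (R₁ + c), eventually_gt_atTop (R₂ + c),
    eventually_ge_atTop (c / 2)] with z hz₁ hz₂ hzc
  have hright : μ (Icc z (z + c)) ≤ β₁ * μ (Icc (-z) z) := by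
    calc μ (Icc z (z + c)) = μ (Icc (z - c + c) (z + c)) := by rw [sub_add_cancel]
      _ ≤ β₁ * μ (Icc (z - c) z) := H₁ _ _ (Or.inl (by linarith))
      _ ≤ β₁ * μ (Icc (-z) z) := by gcongr; linarith
  have hleft : μ (Icc (-(z + c)) (-z)) ≤ β₂ * μ (Icc (-z) z) := by
    calc μ (Icc (-(z + c)) (-z)) = μ (Icc (-z + -c) (-z + c + -c)) := by
          rw [neg_add, add_neg_cancel_right]
      _ ≤ β₂ * μ (Icc (-z) (-z + c)) := H₂ _ _ (Or.inr (by linarith))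
      _ ≤ β₂ * μ (Icc (-z) z) := by gcongr; linarith
  have hsplit : μ (Icc (-(z + c)) (z + c)) ≤ (β₂ + 1 + β₁) * μ (Icc (-z) z) := by
    calc μ (Icc (-(z + c)) (z + c))
        ≤ μ (Icc (-(z + c)) (-z) ∪ (Icc (-z) z ∪ Icc z (z + c))) := by
          refine measure_mono ((Icc_subset_Icc_union_Icc).trans (union_subset_union_right _
            Icc_subset_Icc_union_Icc))
      _ ≤ μ (Icc (-(z + c)) (-z)) + (μ (Icc (-z) z) + μ (Icc z (z + c))) :=
          (measure_union_le _ _).trans (by gcongr; exact measure_union_le _ _)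
      _ ≤ β₂ * μ (Icc (-z) z) + (μ (Icc (-z) z) + β₁ * μ (Icc (-z) z)) := by gcongr
      _ = (β₂ + 1 + β₁) * μ (Icc (-z) z) := by ring
  rw [← ENNReal.toReal_mul]
  exact ENNReal.toReal_mono (ENNReal.mul_ne_top (by finiteness) (hμ.measure_Icc_lt_top _ _).ne)
    hsplit

lemma BC.comp_add_const {f : ℝ → E} (hf : BC f) (a : ℝ) : BC fun t => f (t + a) :=
  ⟨hf.1.comp (continuous_add_const a), hf.2.imp fun _ hC t => hC (t + a)⟩

lemma AP.comp_add_const {g : ℝ → E} (hg : AP g) (a : ℝ) : AP fun t => g (t + a) := by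
  refine ⟨hg.1.comp (continuous_add_const a), fun ε hε => ?_⟩
  obtain ⟨l, hl, h⟩ := hg.2 ε hε
  refine ⟨l, hl, fun b => ?_⟩
  obtain ⟨τ, hτ, hτε⟩ := h b
  exact ⟨τ, hτ, fun t => by simpa only [add_right_comm] using hτε (t + a)⟩

lemma Erg.comp_add_const (hμ : InM μ) (hν : InM ν) (hμ1 : M1 μ) (hν1 : M1 ν) {φ : ℝ → E}
    (hφ : Erg μ ν φ) (a : ℝ) : Erg μ ν fun t => φ (t + a) := by
  obtain ⟨hφb, hφmean⟩ := hφ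
  refine ⟨hφb.comp_add_const a, ?_⟩
  obtain ⟨β, K, hβ, hint⟩ := hμ1.exists_integral_norm_comp_add_le hμ hφb.1 a
  obtain ⟨C, hC⟩ := hν1.exists_eventually_measure_Icc_add_le hν |a|
  have hshift : Tendsto (fun z : ℝ => z + |a|) atTop atTop :=
    tendsto_atTop_add_const_right _ _ tendsto_id
  have hA := hν.tendsto_toReal_measure_Icc
  have hlim : Tendsto (fun z : ℝ => β * C * ((ν (Icc (-(z + |a|)) (z + |a|))).toReal⁻¹ *
      ∫ t in Icc (-(z + |a|)) (z + |a|), ‖φ t‖ ∂μ) + K * (ν (Icc (-z) z)).toReal⁻¹)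
      atTop (𝓝 0) := by
    simpa using ((hφmean.comp hshift).const_mul (β * C)).add (hA.inv_tendsto_atTop.const_mul K)
  refine tendsto_of_tendsto_of_tendsto_of_le_of_le' tendsto_const_nhds hlim
    (Eventually.of_forall fun z => by positivity) ?_
  filter_upwards [hC, hA.eventually_gt_atTop 0, (hA.comp hshift).eventually_gt_atTop 0]
    with z hCz hApos hBpos
  simp only [Function.comp_apply] at hBpos
  set A := (ν (Icc (-z) z)).toReal
  set B := (ν (Icc (-(z + |a|)) (z + |a|))).toReal
  set J := ∫ t in Icc (-(z + |a|)) (z + |a|), ‖φ t‖ ∂μ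
  have hAB : A⁻¹ ≤ C * B⁻¹ := by
    rw [← div_eq_mul_inv, le_div_iff₀ hBpos, inv_mul_le_iff₀ hApos]
    linarith
  have hJ : 0 ≤ J := integral_nonneg fun _ => norm_nonneg _
  calc A⁻¹ * ∫ t in Icc (-z) z, ‖φ (t + a)‖ ∂μ ≤ A⁻¹ * (β * J + K) := by
        gcongr; exact hint z
    _ = β * (A⁻¹ * J) + K * A⁻¹ := by ring
    _ ≤ β * (C * B⁻¹ * J) + K * A⁻¹ := by gcongr
    _ = β * C * (B⁻¹ * J) + K * A⁻¹ := by ring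

lemma PAP.comp_add_const (hμ : InM μ) (hν : InM ν) (hμ1 : M1 μ) (hν1 : M1 ν) {f : ℝ → E}
    (hf : PAP μ ν f) (a : ℝ) : PAP μ ν fun t => f (t + a) := by
  obtain ⟨hfb, g, φ, hg, hφ, hfgφ⟩ := hf
  exact ⟨hfb.comp_add_const a, _, _, hg.comp_add_const a, hφ.comp_add_const hμ hν hμ1 hν1 a,
    fun t => hfgφ (t + a)⟩

end TranslationInvariance

theorem pap_translation_invariant_general {n : ℕ} (μ ν : Measure ℝ)
    (hμ : InM μ) (hν : InM ν) (hμ1 : M1 μ) (hν1 : M1 ν)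
    (f : ℝ → (Fin n → ℝ)) (hf : PAP μ ν f) (a : ℝ) :
    PAP μ ν (fun t => f (t + a)) :=
  hf.comp_add_const hμ hν hμ1 hν1 a

theorem pap_translation_invariant {n : ℕ} (μ ν : Measure ℝ)
    (hμ : InM μ) (hν : InM ν) (hμ1 : M1 μ) (hν1 : M1 ν) (hM2 : M2 μ ν)
    (f : ℝ → (Fin n → ℝ)) (hf : PAP μ ν f) (a : ℝ) :
    PAP μ ν (fun t => f (t + a)) :=
  pap_translation_invariant_general μ ν hμ hν hμ1 hν1 f hf a
end
end

section
/- Let μ, ν ∈ 𝓜 and let y, z ∈ 𝓟𝓐𝓟(ℝ,ℝ,μ,ν). Then the pointwise product y·z, that is t ↦ y(t)z(t), also belongs to 𝓟𝓐𝓟(ℝ,ℝ,μ,ν). -/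
open MeasureTheory Filter Topology

noncomputable section

/-!
Almost periodic functions are bounded and uniformly continuous, and any two of them have common
almost periods (Bohr), so their product is again almost periodic. Writing `y = g₁ + φ₁` and
`z = g₂ + φ₂`, one has `y z = g₁ g₂ + (g₁ φ₂ + φ₁ z)`; the ergodic space is closed under sums and
under multiplication by bounded continuous functions, because the `(μ, ν)`-mean of `‖φ‖` is
monotone and subadditive in `‖φ‖` once `μ` is finite on compact intervals.
-/

def IsAlmostPeriod {E : Type*} [NormedAddCommGroup E] (f : ℝ → E) (ε τ : ℝ) : Prop :=
  ∀ t, ‖f (t + τ) - f t‖ < ε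

section AlmostPeriodic

variable {E F : Type*} [NormedAddCommGroup E] [NormedAddCommGroup F] {f : ℝ → E} {g : ℝ → F}

theorem IsAlmostPeriod.mono {ε ε' τ : ℝ} (h : IsAlmostPeriod f ε τ) (hε : ε ≤ ε') :
    IsAlmostPeriod f ε' τ :=
  fun t => (h t).trans_le hε

theorem IsAlmostPeriod.sub {ε₁ ε₂ τ₁ τ₂ : ℝ} (h₁ : IsAlmostPeriod f ε₁ τ₁)
    (h₂ : IsAlmostPeriod f ε₂ τ₂) : IsAlmostPeriod f (ε₁ + ε₂) (τ₁ - τ₂) := by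
  intro t
  have h₂' := h₂ (t - τ₂)
  rw [sub_add_cancel] at h₂'
  rw [show t + (τ₁ - τ₂) = t - τ₂ + τ₁ by ring, ← sub_sub_sub_cancel_right _ _ (f (t - τ₂))]
  exact (norm_sub_le _ _).trans_lt (add_lt_add (h₁ _) h₂')

theorem IsAlmostPeriod.of_dist_lt {ε ε' δ τ τ' : ℝ}
    (hδ : ∀ s t, dist s t < δ → dist (f s) (f t) < ε') (h : IsAlmostPeriod f ε τ)
    (hτ : dist τ' τ < δ) : IsAlmostPeriod f (ε' + ε) τ' := by
  intro t
  have hclose := hδ (t + τ') (t + τ) (by rwa [dist_add_left])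
  rw [dist_eq_norm] at hclose
  exact (norm_sub_le_norm_sub_add_norm_sub _ (f (t + τ)) _).trans_lt (add_lt_add hclose (h t))

theorem isAlmostPeriod_prodMk {ε τ : ℝ} :
    IsAlmostPeriod (fun t => (f t, g t)) ε τ ↔ IsAlmostPeriod f ε τ ∧ IsAlmostPeriod g ε τ := by
  simp only [IsAlmostPeriod, Prod.mk_sub_mk, Prod.norm_def, max_lt_iff, forall_and]

theorem AP.bc (hf : AP f) : BC f := by
  obtain ⟨l, hl, hperiods⟩ := hf.2 1 one_pos
  obtain ⟨C, hC⟩ := (isCompact_Icc (a := 0) (b := l)).exists_bound_of_continuousOn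
    hf.1.continuousOn
  refine ⟨hf.1, C + 1, fun t => ?_⟩
  obtain ⟨τ, hτ, hτf⟩ := hperiods (-t)
  have hbound := hC (t + τ) ⟨by linarith [hτ.1], by linarith [hτ.2]⟩
  linarith [norm_le_norm_add_norm_sub (f (t + τ)) (f t), hτf t]

theorem AP.uniformContinuous (hf : AP f) : UniformContinuous f := by
  rw [Metric.uniformContinuous_iff]
  intro ε hε
  obtain ⟨l, hl, hperiods⟩ := hf.2 (ε / 3) (by positivity)
  obtain ⟨δ, hδ, hfδ⟩ := Metric.uniformContinuousOn_iff.1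
    ((isCompact_Icc (a := -1) (b := l + 1)).uniformContinuousOn_of_continuous hf.1.continuousOn)
    (ε / 3) (by positivity)
  refine ⟨min δ 1, lt_min hδ one_pos, fun {s t} hst => ?_⟩
  obtain ⟨τ, hτ, hτf⟩ := hperiods (-t)
  rw [Real.dist_eq, lt_min_iff] at hst
  have hst' := abs_lt.1 hst.2
  have hmid : dist (f (s + τ)) (f (t + τ)) < ε / 3 :=
    hfδ _ ⟨by linarith [hτ.1], by linarith [hτ.2]⟩ _ ⟨by linarith [hτ.1], by linarith [hτ.2]⟩
      (by rw [dist_add_right, Real.dist_eq]; exact hst.1)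
  have hs : dist (f s) (f (s + τ)) < ε / 3 := by rw [dist_comm, dist_eq_norm]; exact hτf s
  have ht : dist (f (t + τ)) (f t) < ε / 3 := by rw [dist_eq_norm]; exact hτf t
  linarith [dist_triangle4 (f s) (f (s + τ)) (f (t + τ)) (f t)]

theorem exists_forall_exists_abs_le_dist_lt {X : Type*} [PseudoMetricSpace X] {d : ℝ → X}
    (hd : TotallyBounded (Set.range d)) {δ : ℝ} (hδ : 0 < δ) :
    ∃ B, ∀ a, ∃ b, |b| ≤ B ∧ dist (d a) (d b) < δ := by
  have hnet := Metric.finite_approx_of_totallyBounded hd δ hδ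
  rw [← Set.image_univ] at hnet
  obtain ⟨S, -, hSfin, hcover⟩ := Set.exists_subset_image_finite_and.1 hnet
  obtain ⟨B, hB⟩ := isBounded_iff_forall_norm_le.1 hSfin.isBounded
  refine ⟨B, fun a => ?_⟩
  obtain ⟨_, ⟨b, hbS, rfl⟩, hab⟩ := Set.mem_iUnion₂.1 (hcover ⟨a, Set.mem_univ a, rfl⟩)
  exact ⟨b, hB b hbS, hab⟩

/-- Bohr's argument: the differences `τ_f(a) - τ_g(a)` of almost periods of `f` and `g` chosen
in `[a, a + l]` range over a compact set, so each lies within `δ` of some `τ_f(b) - τ_g(b)` with `b`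
in a fixed bounded set; then `τ_f(a) - τ_f(b)` is an almost period of `f` within `δ` of the almost
period `τ_g(a) - τ_g(b)` of `g`. -/
theorem AP.prodMk (hf : AP f) (hg : AP g) : AP (fun t => (f t, g t)) := by
  refine ⟨hf.1.prodMk hg.1, fun ε hε => ?_⟩
  obtain ⟨δ, hδ, hgδ⟩ := Metric.uniformContinuous_iff.1 hg.uniformContinuous (ε / 2) (by positivity)
  obtain ⟨lf, hlf, hfperiods⟩ := hf.2 (ε / 4) (by positivity)
  obtain ⟨lg, -, hgperiods⟩ := hg.2 (ε / 4) (by positivity)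
  choose τf hτf hfτ using hfperiods
  choose τg hτg hgτ using hgperiods
  change ∀ a, IsAlmostPeriod f (ε / 4) (τf a) at hfτ
  change ∀ a, IsAlmostPeriod g (ε / 4) (τg a) at hgτ
  have hd : TotallyBounded (Set.range fun a => τf a - τg a) :=
    isCompact_Icc.totallyBounded.subset <| Set.range_subset_iff.2 fun a =>
      (⟨by linarith [(hτf a).1, (hτg a).2], by linarith [(hτf a).2, (hτg a).1]⟩ :
        τf a - τg a ∈ Set.Icc (-lg) lf)
  obtain ⟨B, hB⟩ := exists_forall_exists_abs_le_dist_lt hd hδ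
  have hB₀ : 0 ≤ B := (abs_nonneg _).trans (hB 0).choose_spec.1
  refine ⟨2 * B + 2 * lf, by positivity, fun A => ?_⟩
  obtain ⟨b, hbB, hab⟩ := hB (A + B + lf)
  set a := A + B + lf
  have hb := abs_le.1 hbB
  refine ⟨τf a - τf b, ⟨by linarith [(hτf a).1, (hτf b).2], by linarith [(hτf a).2, (hτf b).1]⟩,
    isAlmostPeriod_prodMk.2 ⟨((hfτ a).sub (hfτ b)).mono (by linarith), ?_⟩⟩
  have hτ : dist (τf a - τf b) (τg a - τg b) < δ := by
    rwa [Real.dist_eq, show τf a - τf b - (τg a - τg b) = τf a - τg a - (τf b - τg b) by ring,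
      ← Real.dist_eq]
  exact (((hgτ a).sub (hgτ b)).of_dist_lt hgδ hτ).mono (by linarith)

end AlmostPeriodic

theorem InM.isFiniteMeasureOnCompacts_s7 {μ : Measure ℝ} (hμ : InM μ) :
    IsFiniteMeasureOnCompacts μ := by
  refine ⟨fun K hK => ?_⟩
  obtain ⟨r, hr, hKr⟩ := hK.isBounded.subset_closedBall_lt 0 0
  rw [Real.closedBall_eq_Icc, zero_sub, zero_add] at hKr
  exact (measure_mono hKr).trans_lt (hμ.2 _ _ (by linarith))

def ergodicMean {E : Type*} [NormedAddCommGroup E] (μ ν : Measure ℝ) (f : ℝ → E) (z : ℝ) : ℝ :=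
  ((ν (Set.Icc (-z) z)).toReal)⁻¹ * ∫ t in Set.Icc (-z) z, ‖f t‖ ∂μ

section Ergodic

variable {E F : Type*} [NormedAddCommGroup E] [NormedAddCommGroup F] {μ ν : Measure ℝ}
  {φ : ℝ → E} {ψ : ℝ → F}

theorem Erg.tendsto_ergodicMean (hφ : Erg μ ν φ) : Tendsto (ergodicMean μ ν φ) atTop (𝓝 0) :=
  hφ.2

theorem ergodicMean_nonneg (z : ℝ) : 0 ≤ ergodicMean μ ν φ z :=
  mul_nonneg (inv_nonneg.2 ENNReal.toReal_nonneg) (integral_nonneg fun _ => norm_nonneg _)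

variable [IsFiniteMeasureOnCompacts μ]

theorem ergodicMean_le_mul_of_norm_le {C : ℝ} (hφ : Continuous φ)
    (h : ∀ t, ‖ψ t‖ ≤ C * ‖φ t‖) (z : ℝ) :
    ergodicMean μ ν ψ z ≤ C * ergodicMean μ ν φ z := by
  have hφi : IntegrableOn (fun t => ‖φ t‖) (Set.Icc (-z) z) μ := hφ.norm.integrableOn_Icc
  rw [ergodicMean, ergodicMean, mul_left_comm, ← integral_const_mul C]
  refine mul_le_mul_of_nonneg_left ?_ (inv_nonneg.2 ENNReal.toReal_nonneg)
  exact integral_mono_of_nonneg (Eventually.of_forall fun _ => norm_nonneg _)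
    (hφi.const_mul C) (Eventually.of_forall h)

theorem ergodicMean_add_le {φ ψ : ℝ → E} (hφ : Continuous φ) (hψ : Continuous ψ) (z : ℝ) :
    ergodicMean μ ν (φ + ψ) z ≤ ergodicMean μ ν φ z + ergodicMean μ ν ψ z := by
  have hφi : IntegrableOn (fun t => ‖φ t‖) (Set.Icc (-z) z) μ := hφ.norm.integrableOn_Icc
  have hψi : IntegrableOn (fun t => ‖ψ t‖) (Set.Icc (-z) z) μ := hψ.norm.integrableOn_Icc
  rw [ergodicMean, ergodicMean, ergodicMean, ← mul_add, ← integral_add hφi hψi]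
  refine mul_le_mul_of_nonneg_left ?_ (inv_nonneg.2 ENNReal.toReal_nonneg)
  exact integral_mono_of_nonneg (Eventually.of_forall fun _ => norm_nonneg _) (hφi.add hψi)
    (Eventually.of_forall fun t => norm_add_le (φ t) (ψ t))

theorem Erg.of_norm_le_mul {C : ℝ} (hψ : Continuous ψ) (hφ : Erg μ ν φ)
    (h : ∀ t, ‖ψ t‖ ≤ C * ‖φ t‖) : Erg μ ν ψ := by
  obtain ⟨Cφ, hCφ⟩ := hφ.1.2
  refine ⟨⟨hψ, |C| * Cφ, fun t => ?_⟩, ?_⟩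
  · exact (h t).trans ((mul_le_mul_of_nonneg_right (le_abs_self C) (norm_nonneg _)).trans
      (mul_le_mul_of_nonneg_left (hCφ t) (abs_nonneg C)))
  · exact squeeze_zero ergodicMean_nonneg (ergodicMean_le_mul_of_norm_le hφ.1.1 h)
      (by simpa using hφ.tendsto_ergodicMean.const_mul C)

theorem Erg.add {φ ψ : ℝ → E} (hφ : Erg μ ν φ) (hψ : Erg μ ν ψ) : Erg μ ν (φ + ψ) := by
  obtain ⟨Cφ, hCφ⟩ := hφ.1.2
  obtain ⟨Cψ, hCψ⟩ := hψ.1.2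
  refine ⟨⟨hφ.1.1.add hψ.1.1, Cφ + Cψ, fun t => ?_⟩, ?_⟩
  · exact (norm_add_le _ _).trans (add_le_add (hCφ t) (hCψ t))
  · exact squeeze_zero ergodicMean_nonneg (ergodicMean_add_le hφ.1.1 hψ.1.1)
      (by simpa using hφ.tendsto_ergodicMean.add hψ.tendsto_ergodicMean)

end Ergodic

section Ring

variable {R : Type*} [NonUnitalNormedRing R] {μ ν : Measure ℝ} [IsFiniteMeasureOnCompacts μ]
  {f g φ : ℝ → R}

theorem BC.mul (hf : BC f) (hg : BC g) : BC (fun t => f t * g t) := by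
  obtain ⟨Cf, hCf⟩ := hf.2
  obtain ⟨Cg, hCg⟩ := hg.2
  refine ⟨hf.1.mul hg.1, Cf * Cg, fun t => (norm_mul_le _ _).trans ?_⟩
  exact mul_le_mul (hCf t) (hCg t) (norm_nonneg _) ((norm_nonneg _).trans (hCf t))

theorem AP.mul (hf : AP f) (hg : AP g) : AP (fun t => f t * g t) := by
  obtain ⟨Cf, hCf⟩ := hf.bc.2
  obtain ⟨Cg, hCg⟩ := hg.bc.2
  have hCf₀ : 0 ≤ Cf := (norm_nonneg _).trans (hCf 0)
  have hCg₀ : 0 ≤ Cg := (norm_nonneg _).trans (hCg 0)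
  refine ⟨hf.1.mul hg.1, fun ε hε => ?_⟩
  set η := ε / (Cf + Cg + 1)
  obtain ⟨l, hl, hperiods⟩ := (hf.prodMk hg).2 η (by positivity)
  refine ⟨l, hl, fun a => ?_⟩
  obtain ⟨τ, hτa, hτ⟩ := hperiods a
  obtain ⟨hfτ, hgτ⟩ := isAlmostPeriod_prodMk.1 hτ
  refine ⟨τ, hτa, fun t => ?_⟩
  calc ‖f (t + τ) * g (t + τ) - f t * g t‖
      = ‖f (t + τ) * (g (t + τ) - g t) + (f (t + τ) - f t) * g t‖ := by
        rw [mul_sub, sub_mul, sub_add_sub_cancel]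
    _ ≤ ‖f (t + τ)‖ * ‖g (t + τ) - g t‖ + ‖f (t + τ) - f t‖ * ‖g t‖ :=
        (norm_add_le _ _).trans (add_le_add (norm_mul_le _ _) (norm_mul_le _ _))
    _ ≤ Cf * η + η * Cg := by
        gcongr
        exacts [hCf _, (hgτ t).le, (hfτ t).le, hCg t]
    _ < (Cf + Cg + 1) * η := by nlinarith [show 0 < η by positivity]
    _ = ε := mul_div_cancel₀ ε (by positivity)

theorem Erg.bc_mul (hf : BC f) (hφ : Erg μ ν φ) : Erg μ ν (fun t => f t * φ t) := by
  obtain ⟨C, hC⟩ := hf.2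
  exact hφ.of_norm_le_mul (hf.1.mul hφ.1.1) fun t =>
    (norm_mul_le _ _).trans (mul_le_mul_of_nonneg_right (hC t) (norm_nonneg _))

theorem Erg.mul_bc (hφ : Erg μ ν φ) (hf : BC f) : Erg μ ν (fun t => φ t * f t) := by
  obtain ⟨C, hC⟩ := hf.2
  exact hφ.of_norm_le_mul (hφ.1.1.mul hf.1) fun t => (norm_mul_le _ _).trans <| by
    rw [mul_comm]; exact mul_le_mul_of_nonneg_right (hC t) (norm_nonneg _)

theorem PAP.mul {y z : ℝ → R} (hy : PAP μ ν y) (hz : PAP μ ν z) :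
    PAP μ ν (fun t => y t * z t) := by
  obtain ⟨hy_bc, g₁, φ₁, hg₁, hφ₁, hy_eq⟩ := hy
  obtain ⟨hz_bc, g₂, φ₂, hg₂, hφ₂, hz_eq⟩ := hz
  refine ⟨hy_bc.mul hz_bc, _, _, hg₁.mul hg₂, (hφ₂.bc_mul hg₁.bc).add (hφ₁.mul_bc hz_bc),
    fun t => ?_⟩
  simp only [Pi.add_apply, hy_eq t, hz_eq t]
  noncomm_ring

end Ring

theorem pap_product_general (μ ν : Measure ℝ) (hμ : InM μ)
    (y z : ℝ → ℝ) (hy : PAP μ ν y) (hz : PAP μ ν z) :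
    PAP μ ν (fun t => y t * z t) :=
  have := hμ.isFiniteMeasureOnCompacts_s7
  hy.mul hz

theorem pap_product (μ ν : Measure ℝ) (hμ : InM μ) (hν : InM ν)
    (y z : ℝ → ℝ) (hy : PAP μ ν y) (hz : PAP μ ν z) :
    PAP μ ν (fun t => y t * z t) :=
  pap_product_general μ ν hμ y z hy hz
end
end

section
/- Let μ, ν ∈ 𝓜 both satisfy condition (M.1) and suppose (M.2) holds for the pair (μ,ν). Let c : ℝ → ℝ be continuous with c* := inf_{t∈ℝ} c(t) > 0, and let F ∈ 𝓔(ℝ,ℝ,μ,ν). Then the function t ↦ ∫_{−∞}^{t} e^{−∫_{s}^{t} c(u) du} F(s) ds is bounded, continuous, and belongs to 𝓔(ℝ,ℝ,μ,ν). -/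
/-!
Let `a = inf c > 0`. Since `∫_s^t c ≥ a (t - s)`, the function `G` of the theorem satisfies
`|G t| ≤ ∫ |F (t - r)| dρ(r)` for the finite measure `ρ = e^{-a r} 𝟙_{r > 0} dr`. Averaging over
`[-z, z]` and exchanging the integrals, it suffices that every translate `F (· - r)` is ergodic,
with averages bounded uniformly in `r` by (M.2); dominated convergence in `r` concludes.
Translates stay ergodic: by (M.1) for `μ`, away from a bounded interval the translate has
`μ`-integral at most `β` times that of `F` on `[-z-|r|, z+|r|]`, and by (M.1) for `ν`,
`ν [-z-|r|, z+|r|] ≤ κ ν [-z, z]` for large `z`. Continuity of `G` follows from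
`G t = e^{-C t} ∫_{-∞}^t e^{C s} F s ds` with `C` a primitive of `c`.
-/

open MeasureTheory Filter Topology

noncomputable section

open Set
open scoped ENNReal

namespace InM

variable {μ : Measure ℝ}

theorem measure_Icc_lt_top_s9 (hμ : InM μ) (x y : ℝ) : μ (Icc x y) < ⊤ := by
  rcases le_or_gt x y with h | h
  · exact hμ.2 x y h
  · simp [Icc_eq_empty_of_lt h]

theorem tendsto_measure_Icc_neg_atTop (hμ : InM μ) :
    Tendsto (fun z : ℝ => μ (Icc (-z) z)) atTop (𝓝 ⊤) := by
  have hmono : Monotone fun z : ℝ => μ (Icc (-z) z) := fun x y hxy =>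
    measure_mono (Icc_subset_Icc (neg_le_neg hxy) hxy)
  have hunion : (⋃ n : ℕ, Icc (-(n : ℝ)) n) = univ :=
    eq_univ_of_forall fun x => mem_iUnion.2 <| (exists_nat_ge |x|).imp fun _ hn =>
      ⟨neg_le_of_abs_le hn, le_of_abs_le hn⟩
  have hseq : Tendsto (fun n : ℕ => μ (Icc (-(n : ℝ)) n)) atTop (𝓝 ⊤) := by
    have := tendsto_measure_iUnion_atTop (μ := μ)
      (fun m n (hmn : m ≤ n) => Icc_subset_Icc (neg_le_neg (Nat.mono_cast hmn)) (Nat.mono_cast hmn))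
    rwa [hunion, hμ.1] at this
  have hsup : ⨆ z : ℝ, μ (Icc (-z) z) = ⊤ :=
    top_le_iff.1 (le_of_tendsto' hseq fun n => le_iSup (fun z : ℝ => μ (Icc (-z) z)) n)
  exact hsup ▸ tendsto_atTop_iSup hmono

theorem isLocallyFiniteMeasure (hμ : InM μ) : IsLocallyFiniteMeasure μ :=
  ⟨fun x => ⟨Icc (x - 1) (x + 1), Icc_mem_nhds (by linarith) (by linarith),
    hμ.measure_Icc_lt_top_s9 _ _⟩⟩

end InM

namespace M1

variable {μ : Measure ℝ}

theorem exists_measure_Icc_add_le_s9 (hμ1 : M1 μ) (r : ℝ) :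
    ∃ β : ℝ≥0∞, β ≠ ⊤ ∧ ∃ a b : ℝ, ∀ x y : ℝ, b < x ∨ y < a →
      μ (Icc (x + r) (y + r)) ≤ β * μ (Icc x y) := by
  obtain ⟨β, -, a, b, h⟩ := hμ1 r
  refine ⟨ENNReal.ofReal β, ENNReal.ofReal_ne_top, a, b, fun x y hxy => ?_⟩
  rw [← image_add_const_Icc]
  refine h _ measurableSet_Icc (eq_empty_of_forall_notMem ?_)
  rintro t ⟨⟨hxt, hty⟩, hat, htb⟩
  rcases hxy with hbx | hya <;> linarith

theorem exists_eventually_measure_Icc_add_le_s9 (hμ1 : M1 μ) {ρ : ℝ} (hρ : 0 ≤ ρ) :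
    ∃ κ : ℝ≥0∞, κ ≠ 0 ∧ κ ≠ ⊤ ∧
      ∀ᶠ z in atTop, μ (Icc (-(z + ρ)) (z + ρ)) ≤ κ * μ (Icc (-z) z) := by
  obtain ⟨β₁, hβ₁, a₁, b₁, h₁⟩ := hμ1.exists_measure_Icc_add_le_s9 ρ
  obtain ⟨β₂, hβ₂, a₂, b₂, h₂⟩ := hμ1.exists_measure_Icc_add_le_s9 (-ρ)
  refine ⟨β₂ + 1 + β₁, by simp, by simp [hβ₁, hβ₂], ?_⟩
  filter_upwards [eventually_gt_atTop (b₁ + ρ), eventually_gt_atTop (ρ - a₂),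
    eventually_ge_atTop ρ] with z hz₁ hz₂ hz
  have hright : μ (Icc z (z + ρ)) ≤ β₁ * μ (Icc (-z) z) :=
    calc μ (Icc z (z + ρ)) = μ (Icc (z - ρ + ρ) (z + ρ)) := by rw [sub_add_cancel]
      _ ≤ β₁ * μ (Icc (z - ρ) z) := h₁ _ _ (Or.inl (by linarith))
      _ ≤ β₁ * μ (Icc (-z) z) := by gcongr; linarith
  have hleft : μ (Icc (-(z + ρ)) (-z)) ≤ β₂ * μ (Icc (-z) z) :=
    calc μ (Icc (-(z + ρ)) (-z)) = μ (Icc (-z + -ρ) (-z + ρ + -ρ)) := by ring_nf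
      _ ≤ β₂ * μ (Icc (-z) (-z + ρ)) := h₂ _ _ (Or.inr (by linarith))
      _ ≤ β₂ * μ (Icc (-z) z) := by gcongr; linarith
  calc μ (Icc (-(z + ρ)) (z + ρ))
      = μ (Icc (-(z + ρ)) (-z) ∪ Icc (-z) z ∪ Icc z (z + ρ)) := by
        rw [Icc_union_Icc_eq_Icc (by linarith) (by linarith),
          Icc_union_Icc_eq_Icc (by linarith) (by linarith)]
    _ ≤ μ (Icc (-(z + ρ)) (-z)) + μ (Icc (-z) z) + μ (Icc z (z + ρ)) :=
        (measure_union_le _ _).trans (by gcongr; exact measure_union_le _ _)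
    _ ≤ β₂ * μ (Icc (-z) z) + 1 * μ (Icc (-z) z) + β₁ * μ (Icc (-z) z) := by
        rw [one_mul]; gcongr
    _ = (β₂ + 1 + β₁) * μ (Icc (-z) z) := by ring

theorem exists_lintegral_Icc_comp_sub_le (hμ : InM μ) (hμ1 : M1 μ) {g : ℝ → ℝ≥0∞}
    (hg : Measurable g) {M : ℝ≥0∞} (hgM : ∀ t, g t ≤ M) (hM : M ≠ ⊤) (r : ℝ) :
    ∃ β C : ℝ≥0∞, β ≠ ⊤ ∧ C ≠ ⊤ ∧ ∀ z : ℝ,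
      ∫⁻ t in Icc (-z) z, g (t - r) ∂μ ≤
        β * ∫⁻ t in Icc (-(z + |r|)) (z + |r|), g t ∂μ + C := by
  obtain ⟨β, -, a, b, h⟩ := hμ1 r
  set m := μ.map (· - r)
  have hm : ∀ s, MeasurableSet s →
      m.restrict (s \ Icc a b) ≤ ENNReal.ofReal β • μ.restrict s := fun s hs =>
    Measure.le_iff.2 fun A hA => by
      have hAs : MeasurableSet (A ∩ (s \ Icc a b)) := hA.inter (hs.diff measurableSet_Icc)
      rw [Measure.restrict_apply hA, Measure.map_apply (measurable_sub_const r) hAs,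
        Measure.smul_apply, Measure.restrict_apply hA, smul_eq_mul]
      calc μ ((· - r) ⁻¹' (A ∩ (s \ Icc a b))) = μ ((· + r) '' (A ∩ (s \ Icc a b))) := by
            rw [image_add_right]; rfl
        _ ≤ ENNReal.ofReal β * μ (A ∩ (s \ Icc a b)) :=
            h _ hAs (by rw [inter_assoc, sdiff_inter_self, inter_empty])
        _ ≤ ENNReal.ofReal β * μ (A ∩ s) := by gcongr; exact sdiff_subset
  have hmI : m (Icc a b) ≠ ⊤ := by
    rw [Measure.map_apply (measurable_sub_const r) measurableSet_Icc, preimage_sub_const_Icc]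
    exact (hμ.measure_Icc_lt_top_s9 _ _).ne
  refine ⟨ENNReal.ofReal β, M * m (Icc a b), ENNReal.ofReal_ne_top, ENNReal.mul_ne_top hM hmI,
    fun z => ?_⟩
  set S := Icc (-z - r) (z - r)
  have hS : ∫⁻ t in Icc (-z) z, g (t - r) ∂μ = ∫⁻ t in S, g t ∂m := by
    rw [setLIntegral_map measurableSet_Icc hg (measurable_sub_const r), preimage_sub_const_Icc]
    simp
  have hinside : ∫⁻ t in S ∩ Icc a b, g t ∂m ≤ M * m (Icc a b) :=
    calc ∫⁻ t in S ∩ Icc a b, g t ∂m ≤ M * m (S ∩ Icc a b) :=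
          (lintegral_mono fun t => hgM t).trans_eq (setLIntegral_const _ _)
      _ ≤ M * m (Icc a b) := by gcongr; exact inter_subset_right
  have houtside : ∫⁻ t in S \ Icc a b, g t ∂m ≤ ENNReal.ofReal β * ∫⁻ t in S, g t ∂μ :=
    (lintegral_mono' (hm S measurableSet_Icc) le_rfl).trans_eq (lintegral_smul_measure _ _)
  calc ∫⁻ t in Icc (-z) z, g (t - r) ∂μ
      = ∫⁻ t in S ∩ Icc a b, g t ∂m + ∫⁻ t in S \ Icc a b, g t ∂m := by
        rw [hS, lintegral_inter_add_sdiff _ _ measurableSet_Icc]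
    _ ≤ ENNReal.ofReal β * ∫⁻ t in S, g t ∂μ + M * m (Icc a b) := by
        rw [add_comm]; exact add_le_add houtside hinside
    _ ≤ ENNReal.ofReal β * ∫⁻ t in Icc (-(z + |r|)) (z + |r|), g t ∂μ + M * m (Icc a b) := by
        gcongr
        exact Icc_subset_Icc (by linarith [le_abs_self r]) (by linarith [neg_abs_le r])

end M1

def ergMean (μ ν : Measure ℝ) (g : ℝ → ℝ≥0∞) (z : ℝ) : ℝ≥0∞ :=
  (∫⁻ t in Icc (-z) z, g t ∂μ) / ν (Icc (-z) z)

section ergMean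

variable {μ ν : Measure ℝ} {E : Type*} [NormedAddCommGroup E]

theorem ergMean_mono {g h : ℝ → ℝ≥0∞} (hgh : ∀ t, g t ≤ h t) (z : ℝ) :
    ergMean μ ν g z ≤ ergMean μ ν h z :=
  ENNReal.div_le_div_right (lintegral_mono fun t => hgh t) _

theorem ergMean_le_mul_div {g : ℝ → ℝ≥0∞} {M : ℝ≥0∞} (hgM : ∀ t, g t ≤ M) (z : ℝ) :
    ergMean μ ν g z ≤ M * (μ (Icc (-z) z) / ν (Icc (-z) z)) := by
  rw [ergMean, ← mul_div_assoc]
  exact ENNReal.div_le_div_right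
    ((lintegral_mono fun t => hgM t).trans_eq (setLIntegral_const _ _)) _

theorem toReal_ergMean_enorm {f : ℝ → E} (hf : AEStronglyMeasurable f μ) (z : ℝ) :
    (ergMean μ ν (‖f ·‖ₑ) z).toReal =
      ((ν (Icc (-z) z)).toReal)⁻¹ * ∫ t in Icc (-z) z, ‖f t‖ ∂μ := by
  rw [ergMean, ENNReal.toReal_div, integral_norm_eq_lintegral_enorm hf.restrict, div_eq_inv_mul]

theorem BC.exists_enorm_le {f : ℝ → E} (hf : BC f) : ∃ M : ℝ≥0∞, M ≠ ⊤ ∧ ∀ t, ‖f t‖ₑ ≤ M := by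
  obtain ⟨-, C, hC⟩ := hf
  exact ⟨ENNReal.ofReal C, ENNReal.ofReal_ne_top, fun t => by
    rw [← ofReal_norm]; exact ENNReal.ofReal_le_ofReal (hC t)⟩

theorem BC.of_enorm_le {f : ℝ → E} (hf : Continuous f) {M : ℝ≥0∞} (hfM : ∀ t, ‖f t‖ₑ ≤ M)
    (hM : M ≠ ⊤) : BC f :=
  ⟨hf, M.toReal, fun t => by rw [← toReal_enorm]; exact ENNReal.toReal_mono hM (hfM t)⟩

theorem Erg.tendsto_ergMean (hμ : InM μ) (hν : InM ν) {f : ℝ → E} (hf : Erg μ ν f) :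
    Tendsto (ergMean μ ν (‖f ·‖ₑ)) atTop (𝓝 0) := by
  obtain ⟨M, hM, hfM⟩ := hf.1.exists_enorm_le
  have hfin : ∀ᶠ z in atTop, ergMean μ ν (‖f ·‖ₑ) z ≠ ⊤ := by
    filter_upwards [hν.tendsto_measure_Icc_neg_atTop.eventually_ne ENNReal.top_ne_zero]
      with z hz
    exact ne_top_of_le_ne_top
      (ENNReal.mul_ne_top hM (ENNReal.div_ne_top (hμ.measure_Icc_lt_top_s9 _ _).ne hz))
      (ergMean_le_mul_div hfM z)
  have hlim := ENNReal.tendsto_ofReal hf.2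
  rw [ENNReal.ofReal_zero] at hlim
  refine hlim.congr' ?_
  filter_upwards [hfin] with z hz
  rw [← toReal_ergMean_enorm hf.1.1.aestronglyMeasurable, ENNReal.ofReal_toReal hz]

theorem Erg.of_tendsto_ergMean {f : ℝ → E} (hf : BC f)
    (h : Tendsto (ergMean μ ν (‖f ·‖ₑ)) atTop (𝓝 0)) : Erg μ ν f := by
  refine ⟨hf, ?_⟩
  simp_rw [← toReal_ergMean_enorm hf.1.aestronglyMeasurable]
  exact (ENNReal.tendsto_toReal ENNReal.zero_ne_top).comp h

end ergMean

section Convolution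

variable {μ ν : Measure ℝ} {g : ℝ → ℝ≥0∞} {M : ℝ≥0∞}

theorem tendsto_ergMean_comp_sub (hμ : InM μ) (hμ1 : M1 μ) (hν : InM ν) (hν1 : M1 ν)
    (hg : Measurable g) (hgM : ∀ t, g t ≤ M) (hM : M ≠ ⊤)
    (h : Tendsto (ergMean μ ν g) atTop (𝓝 0)) (r : ℝ) :
    Tendsto (ergMean μ ν fun t => g (t - r)) atTop (𝓝 0) := by
  obtain ⟨β, C, hβ, hC, hshift⟩ := hμ1.exists_lintegral_Icc_comp_sub_le hμ hg hgM hM r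
  obtain ⟨κ, hκ0, hκ, hgrowth⟩ := hν1.exists_eventually_measure_Icc_add_le_s9 (abs_nonneg r)
  have hbound : Tendsto (fun z => β * (κ * ergMean μ ν g (z + |r|)) + C * (ν (Icc (-z) z))⁻¹)
      atTop (𝓝 0) := by
    have h₁ := ENNReal.Tendsto.const_mul (ENNReal.Tendsto.const_mul
      (h.comp (tendsto_atTop_add_const_right _ |r| tendsto_id)) (Or.inr hκ)) (Or.inr hβ)
    have h₂ := ENNReal.Tendsto.const_mul
      (tendsto_inv_iff.2 hν.tendsto_measure_Icc_neg_atTop) (Or.inr hC)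
    simpa using h₁.add h₂
  refine tendsto_of_tendsto_of_tendsto_of_le_of_le' tendsto_const_nhds hbound
    (Eventually.of_forall fun _ => zero_le) ?_
  filter_upwards [hgrowth] with z hz
  set N := ∫⁻ t in Icc (-(z + |r|)) (z + |r|), g t ∂μ
  have hN : N / ν (Icc (-z) z) ≤ κ * ergMean μ ν g (z + |r|) :=
    calc N / ν (Icc (-z) z) = κ * N / (κ * ν (Icc (-z) z)) :=
          (ENNReal.mul_div_mul_left _ _ hκ0 hκ).symm
      _ ≤ κ * N / ν (Icc (-(z + |r|)) (z + |r|)) := ENNReal.div_le_div_left hz _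
      _ = κ * ergMean μ ν g (z + |r|) := mul_div_assoc _ _ _
  calc ergMean μ ν (fun t => g (t - r)) z ≤ (β * N + C) / ν (Icc (-z) z) :=
        ENNReal.div_le_div_right (hshift z) _
    _ = β * (N / ν (Icc (-z) z)) + C * (ν (Icc (-z) z))⁻¹ := by
        rw [ENNReal.add_div, mul_div_assoc, div_eq_mul_inv C]
    _ ≤ β * (κ * ergMean μ ν g (z + |r|)) + C * (ν (Icc (-z) z))⁻¹ := by gcongr

theorem tendsto_ergMean_lintegral_comp_sub (hμ : InM μ) (hμ1 : M1 μ) (hν : InM ν) (hν1 : M1 ν)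
    (hM2 : M2 μ ν) (ρ : Measure ℝ) [IsFiniteMeasure ρ] (hg : Measurable g)
    (hgM : ∀ t, g t ≤ M) (hM : M ≠ ⊤) (h : Tendsto (ergMean μ ν g) atTop (𝓝 0)) :
    Tendsto (ergMean μ ν fun t => ∫⁻ r, g (t - r) ∂ρ) atTop (𝓝 0) := by
  obtain ⟨K, hM2K, hK⟩ := exists_between hM2
  have := hμ.isLocallyFiniteMeasure
  have hmeas : Measurable fun p : ℝ × ℝ => g (p.2 - p.1) :=
    hg.comp (measurable_snd.sub measurable_fst)
  have hmeas' : Measurable (Function.uncurry fun t r => g (t - r)) :=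
    hg.comp (measurable_fst.sub measurable_snd)
  have hswap : ∀ z, ergMean μ ν (fun t => ∫⁻ r, g (t - r) ∂ρ) z =
      ∫⁻ r, ergMean μ ν (fun t => g (t - r)) z ∂ρ := fun z => by
    simp only [ergMean, div_eq_mul_inv]
    rw [lintegral_lintegral_swap hmeas'.aemeasurable,
      lintegral_mul_const _ hmeas.lintegral_prod_right']
  have hdom := tendsto_lintegral_filter_of_dominated_convergence (μ := ρ) (fun _ => M * K)
    (Eventually.of_forall fun z => (hmeas.lintegral_prod_right').div_const _)
    ((eventually_lt_of_limsup_lt hM2K).mono fun z hz => ae_of_all _ fun r =>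
      (ergMean_le_mul_div (fun t => hgM (t - r)) z).trans (by gcongr))
    (by simpa using ENNReal.mul_ne_top (ENNReal.mul_ne_top hM hK.ne) (measure_ne_top ρ univ))
    (ae_of_all _ fun r => tendsto_ergMean_comp_sub hμ hμ1 hν hν1 hg hgM hM h r)
  simp only [lintegral_zero] at hdom
  exact hdom.congr fun z => (hswap z).symm

end Convolution

def expDecayMeasure (a : ℝ) : Measure ℝ :=
  (volume.restrict (Ioi 0)).withDensity fun r => ENNReal.ofReal (Real.exp (-a * r))

theorem isFiniteMeasure_expDecayMeasure {a : ℝ} (ha : 0 < a) :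
    IsFiniteMeasure (expDecayMeasure a) := by
  refine ⟨?_⟩
  rw [expDecayMeasure, withDensity_apply _ MeasurableSet.univ, Measure.restrict_univ]
  exact (exp_neg_integrableOn_Ioi 0 ha).lintegral_lt_top

section ExpKernel

variable {c : ℝ → ℝ} {a : ℝ} {F : ℝ → ℝ}

theorem lintegral_enorm_exp_neg_integral_mul_le (hc : Continuous c) (hca : ∀ u, a ≤ c u)
    (hF : Measurable F) (t : ℝ) :
    ∫⁻ s in Iic t, ‖Real.exp (-∫ u in Ioc s t, c u) * F s‖ₑ ≤
      ∫⁻ r, ‖F (t - r)‖ₑ ∂expDecayMeasure a := by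
  have hpoint : ∀ s ∈ Iic t, ‖Real.exp (-∫ u in Ioc s t, c u) * F s‖ₑ ≤
      ENNReal.ofReal (Real.exp (-a * (t - s))) * ‖F s‖ₑ := fun s hs => by
    have hint : a * (t - s) ≤ ∫ u in Ioc s t, c u := by
      have := setIntegral_ge_of_const_le_real (μ := volume) (s := Ioc s t) measurableSet_Ioc
        measure_Ioc_lt_top.ne (fun u _ => hca u) hc.integrableOn_Ioc
      rwa [measureReal_def, Real.volume_Ioc, ENNReal.toReal_ofReal (sub_nonneg.2 hs)] at this
    rw [enorm_mul, Real.enorm_of_nonneg (Real.exp_pos _).le]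
    gcongr
    linarith
  calc ∫⁻ s in Iic t, ‖Real.exp (-∫ u in Ioc s t, c u) * F s‖ₑ
      ≤ ∫⁻ s in Iic t, ENNReal.ofReal (Real.exp (-a * (t - s))) * ‖F s‖ₑ :=
        setLIntegral_mono' measurableSet_Iic hpoint
    _ = ∫⁻ r in Ici 0, ENNReal.ofReal (Real.exp (-a * r)) * ‖F (t - r)‖ₑ := by
        have hpre : (t - ·) ⁻¹' Iic t = Ici 0 := by ext; simp
        rw [← hpre, ← (Measure.measurePreserving_sub_left volume t).setLIntegral_comp_preimage_emb
          (Homeomorph.subLeft t).measurableEmbedding]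
        simp only [sub_sub_cancel]
    _ = ∫⁻ r in Ioi 0, ENNReal.ofReal (Real.exp (-a * r)) * ‖F (t - r)‖ₑ :=
        setLIntegral_congr Ioi_ae_eq_Ici.symm
    _ = ∫⁻ r, ‖F (t - r)‖ₑ ∂expDecayMeasure a :=
        (lintegral_withDensity_eq_lintegral_mul _ (by fun_prop) (by fun_prop)).symm

theorem continuous_integral_Iic_exp_neg_integral_mul (hc : Continuous c) (ha : 0 < a)
    (hca : ∀ u, a ≤ c u) (hF : BC F) :
    Continuous fun t => ∫ s in Iic t, Real.exp (-∫ u in Ioc s t, c u) * F s := by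
  set C : ℝ → ℝ := fun t => ∫ u in (0 : ℝ)..t, c u
  have hCc : Continuous C :=
    intervalIntegral.continuous_primitive (fun _ _ => hc.intervalIntegrable _ _) 0
  set H : ℝ → ℝ := fun s => Real.exp (C s) * F s
  have hHc : Continuous H := hCc.rexp.mul hF.1
  have hkernel : ∀ t, ∀ s ∈ Iic t,
      Real.exp (-∫ u in Ioc s t, c u) * F s = Real.exp (-C t) * H s := fun t s hs => by
    rw [← intervalIntegral.integral_of_le hs, ← intervalIntegral.integral_interval_sub_left
      (hc.intervalIntegrable 0 t) (hc.intervalIntegrable 0 s), neg_sub, sub_eq_neg_add,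
      Real.exp_add, mul_assoc]
  have hH : ∀ t, IntegrableOn H (Iic t) := fun t => by
    have := isFiniteMeasure_expDecayMeasure ha
    obtain ⟨M, hM, hFM⟩ := hF.exists_enorm_le
    refine ⟨hHc.aestronglyMeasurable, hasFiniteIntegral_iff_enorm.2 ?_⟩
    calc ∫⁻ s in Iic t, ‖H s‖ₑ
        = ∫⁻ s in Iic t, ‖Real.exp (C t)‖ₑ * ‖Real.exp (-∫ u in Ioc s t, c u) * F s‖ₑ :=
          setLIntegral_congr_fun measurableSet_Iic fun s hs => by
            rw [← enorm_mul, hkernel t s hs, ← mul_assoc, ← Real.exp_add, add_neg_cancel,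
              Real.exp_zero, one_mul]
      _ = ‖Real.exp (C t)‖ₑ * ∫⁻ s in Iic t, ‖Real.exp (-∫ u in Ioc s t, c u) * F s‖ₑ :=
          lintegral_const_mul' _ _ enorm_ne_top
      _ ≤ ‖Real.exp (C t)‖ₑ * ∫⁻ r, ‖F (t - r)‖ₑ ∂expDecayMeasure a :=
          mul_le_mul_right (lintegral_enorm_exp_neg_integral_mul_le hc hca hF.1.measurable t) _
      _ ≤ ‖Real.exp (C t)‖ₑ * (M * expDecayMeasure a univ) := by
          gcongr; exact (lintegral_mono fun r => hFM _).trans_eq (lintegral_const _)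
      _ < ⊤ := ENNReal.mul_lt_top enorm_lt_top
          (ENNReal.mul_lt_top hM.lt_top (measure_lt_top _ _))
  have heq : (fun t => ∫ s in Iic t, Real.exp (-∫ u in Ioc s t, c u) * F s) =
      fun t => Real.exp (-C t) * ((∫ s in Iic 0, H s) + ∫ s in (0 : ℝ)..t, H s) :=
    funext fun t => by
      rw [setIntegral_congr_fun measurableSet_Iic (hkernel t), integral_const_mul,
        ← intervalIntegral.integral_Iic_sub_Iic (hH 0) (hH t), add_sub_cancel]
  rw [heq]
  exact hCc.neg.rexp.mul (continuous_const.add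
    (intervalIntegral.continuous_primitive (fun _ _ => hHc.intervalIntegrable _ _) 0))

end ExpKernel

theorem convolution_preserves_ergodic (μ ν : Measure ℝ)
    (hμ : InM μ) (hν : InM ν) (hμ1 : M1 μ) (hν1 : M1 ν) (hM2 : M2 μ ν)
    (c : ℝ → ℝ) (hccont : Continuous c) (hcpos : 0 < ⨅ t, c t)
    (F : ℝ → ℝ) (hF : Erg μ ν F) :
    Erg μ ν (fun t => ∫ s in Set.Iic t, Real.exp (-(∫ u in Set.Ioc s t, c u)) * F s) := by
  have hbdd : BddBelow (range c) := by
    by_contra h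
    rw [Real.iInf_of_not_bddBelow h] at hcpos
    exact hcpos.false
  have hca : ∀ u, (⨅ t, c t) ≤ c u := ciInf_le hbdd
  have := isFiniteMeasure_expDecayMeasure hcpos
  obtain ⟨M, hM, hFM⟩ := hF.1.exists_enorm_le
  have hFmeas := hF.1.1.measurable
  have hbound : ∀ t, ‖∫ s in Iic t, Real.exp (-∫ u in Ioc s t, c u) * F s‖ₑ ≤
      ∫⁻ r, ‖F (t - r)‖ₑ ∂expDecayMeasure (⨅ t, c t) := fun t =>
    (enorm_integral_le_lintegral_enorm _).trans
      (lintegral_enorm_exp_neg_integral_mul_le hccont hca hFmeas t)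
  refine Erg.of_tendsto_ergMean
    (BC.of_enorm_le (continuous_integral_Iic_exp_neg_integral_mul hccont hcpos hca hF.1)
      (fun t => (hbound t).trans ((lintegral_mono fun r => hFM _).trans_eq (lintegral_const _)))
      (ENNReal.mul_ne_top hM (measure_ne_top _ _)))
    (tendsto_of_tendsto_of_tendsto_of_le_of_le tendsto_const_nhds
      (tendsto_ergMean_lintegral_comp_sub hμ hμ1 hν hν1 hM2 _ hFmeas.enorm hFM hM
        (hF.tendsto_ergMean hμ hν))
      (fun _ => zero_le) (ergMean_mono hbound))
end
end
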